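/- arXiv:0902.1702 — 5 statements merged into one kernel-verified Lean document; each statement's English description precedes it below -/
import Mathlib

section
/- Let R = ℂ[a₁,b₁,c₁,d₁,a₂,b₂,c₂,d₂]/(a₁d₁−b₁c₁−1, a₂d₂−b₂c₂−1) with the 𝔾ₘ-action of weight +1 on b₁,b₂, weight −1 on c₁,c₂, and weight 0 on a₁,d₁,a₂,d₂. Then the ring of invariants R₀ (elements of weight 0) is generated by a₁, d₁, a₂, d₂, b₁c₂, b₂c₁, and the only relation among these generators is (b₁c₂)(b₂c₁) = (a₁d₁−1)(a₂d₂−1). -/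
/-!
A weight-zero monomial pairs off each `bᵢ` with some `cⱼ`, and all four products `bᵢcⱼ` lie in
the algebra generated by the six elements because `b₁c₁ = a₁d₁ - 1` and `b₂c₂ = a₂d₂ - 1`.

For the relations, write `x₀, …, x₅` for the generators and reduce modulo
`x₄x₅ - (x₀x₁ - 1)(x₂x₃ - 1)` to a polynomial in which no monomial is divisible by `x₄x₅`.
The point `b₁ = T`, `c₁ = (a₁d₁ - 1)T⁻¹`, `b₂ = 1`, `c₂ = a₂d₂ - 1` of `SL₂ × SL₂` over
`ℂ[a₁, d₁, a₂, d₂][T, T⁻¹]` sends `x₄ = b₁c₂ ↦ (a₂d₂ - 1)T` and `x₅ = b₂c₁ ↦ (a₁d₁ - 1)T⁻¹`.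
In a reduced polynomial the exponents of `x₄` and `x₅` are determined by the resulting power
of `T`, and `a₁d₁ - 1`, `a₂d₂ - 1` are non-zero divisors, so a reduced polynomial vanishing
at this point is zero.
-/

open MvPolynomial

namespace Stmt1

/-- Variables: `0 ↦ a₁, 1 ↦ b₁, 2 ↦ c₁, 3 ↦ d₁, 4 ↦ a₂, 5 ↦ b₂, 6 ↦ c₂, 7 ↦ d₂`. -/
noncomputable def relIdeal : Ideal (MvPolynomial (Fin 8) ℂ) :=
  Ideal.span {X 0 * X 3 - X 1 * X 2 - 1, X 4 * X 7 - X 5 * X 6 - 1}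

/-- The coordinate ring `R` of pairs of `SL₂` matrices. -/
noncomputable abbrev R := MvPolynomial (Fin 8) ℂ ⧸ relIdeal

/-- The `𝔾ₘ`-weights: `+1` on `b₁,b₂`, `−1` on `c₁,c₂`, `0` on `a₁,d₁,a₂,d₂`. -/
def wt : Fin 8 → ℤ := ![0, 1, -1, 0, 0, 1, -1, 0]

noncomputable def π : MvPolynomial (Fin 8) ℂ →ₐ[ℂ] R := Ideal.Quotient.mkₐ ℂ relIdeal

/-- The six generators `a₁, d₁, a₂, d₂, b₁c₂, b₂c₁` of the invariant ring. -/
noncomputable def gens : Fin 6 → R :=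
  ![π (X 0), π (X 3), π (X 4), π (X 7), π (X 1 * X 6), π (X 5 * X 2)]

end Stmt1

namespace Finsupp

variable {σ : Type*}

theorem exists_eq_add_single_add_single {m : σ →₀ ℕ} {i j : σ} (hij : i ≠ j) (hi : m i ≠ 0)
    (hj : m j ≠ 0) : ∃ m', m = m' + single i 1 + single j 1 := by
  have hi' : (m - single j 1 : σ →₀ ℕ) i ≠ 0 := by simpa [single_apply, hij.symm] using hi
  exact ⟨_, by rw [sub_add_single_one_cancel hi', sub_add_single_one_cancel hj]⟩

theorem exists_weight_eq_zero_or_exists_weight_eq_one_neg_one {w : σ → ℤ}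
    (hw : ∀ k, w k = -1 ∨ w k = 0 ∨ w k = 1) {m : σ →₀ ℕ} (hm : m ≠ 0) (hwm : weight w m = 0) :
    (∃ k, m k ≠ 0 ∧ w k = 0) ∨ ∃ i j, m i ≠ 0 ∧ m j ≠ 0 ∧ w i = 1 ∧ w j = -1 := by
  by_contra! ⟨h0, h1⟩
  have weight_ne : ∀ s : ℤ, s ≠ 0 → (∀ k ∈ m.support, w k = s) → weight w m ≠ 0 := by
    intro s hs hk
    rw [weight_apply, Finsupp.sum, Finset.sum_congr rfl fun k hk' => by rw [hk k hk'],
      ← Finset.sum_smul, ← degree_apply]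
    exact smul_ne_zero ((degree_eq_zero_iff m).not.2 hm) hs
  obtain ⟨k₀, hk₀⟩ := support_nonempty_iff.2 hm
  rw [mem_support_iff] at hk₀
  rcases hw k₀ with hwk₀ | hwk₀ | hwk₀
  · refine weight_ne (-1) (by norm_num) (fun k hk => ?_) hwm
    rw [mem_support_iff] at hk
    rcases hw k with hwk | hwk | hwk
    · exact hwk
    · exact absurd hwk (h0 k hk)
    · exact absurd hwk₀ (h1 k k₀ hk hk₀ hwk)
  · exact h0 k₀ hk₀ hwk₀
  · refine weight_ne 1 one_ne_zero (fun k hk => ?_) hwm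
    rw [mem_support_iff] at hk
    rcases hw k with hwk | hwk | hwk
    · exact absurd hwk (h1 k₀ k hk₀ hk hwk₀)
    · exact absurd hwk (h0 k hk)
    · exact hwk

end Finsupp

namespace MvPolynomial

variable {σ R : Type*}

section WeightZero

variable [CommSemiring R] {w : σ → ℤ}

theorem monomial_one_mem_adjoin_of_weight_eq_zero (hw : ∀ k, w k = -1 ∨ w k = 0 ∨ w k = 1)
    {m : σ →₀ ℕ} (hm : Finsupp.weight w m = 0) :
    monomial m (1 : R) ∈ Algebra.adjoin R
      (X '' {k | w k = 0} ∪ Set.image2 (fun i j => X i * X j) {i | w i = 1} {j | w j = -1}) := by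
  induction hn : m.degree using Nat.strong_induction_on generalizing m with
  | _ n ih =>
    by_cases hm0 : m = 0
    · rw [hm0, ← C_apply, map_one]
      exact one_mem _
    rcases Finsupp.exists_weight_eq_zero_or_exists_weight_eq_one_neg_one hw hm0 hm with
      ⟨k, hk, hwk⟩ | ⟨i, j, hi, hj, hwi, hwj⟩
    · rw [← Finsupp.sub_add_single_one_cancel hk] at hm hn ⊢
      rw [monomial_add_single, pow_one]
      simp only [map_add, Finsupp.weight_single, hwk, smul_zero, add_zero,
        Finsupp.degree_single] at hm hn
      exact mul_mem (ih _ (by omega) hm rfl) (Algebra.subset_adjoin (Or.inl ⟨k, hwk, rfl⟩))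
    · obtain ⟨m', rfl⟩ := Finsupp.exists_eq_add_single_add_single (by rintro rfl; omega) hi hj
      rw [monomial_add_single, monomial_add_single, pow_one, pow_one, mul_assoc]
      simp only [map_add, Finsupp.weight_single, hwi, hwj, one_smul, Finsupp.degree_single] at hm hn
      refine mul_mem (ih _ (by omega) (by linarith) rfl) ?_
      exact Algebra.subset_adjoin (Or.inr ⟨i, hwi, j, hwj, rfl⟩)

theorem weightedHomogeneousSubmodule_zero_eq_adjoin (hw : ∀ k, w k = -1 ∨ w k = 0 ∨ w k = 1) :
    weightedHomogeneousSubmodule R w 0 = Subalgebra.toSubmodule (Algebra.adjoin R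
      (X '' {k | w k = 0} ∪ Set.image2 (fun i j => X i * X j) {i | w i = 1} {j | w j = -1})) := by
  refine le_antisymm (fun p hp => ?_) ?_
  · rw [Subalgebra.mem_toSubmodule, p.as_sum]
    refine Subalgebra.sum_mem _ fun m hm => ?_
    rw [← mul_one (coeff m p), ← smul_eq_mul, ← smul_monomial]
    exact Subalgebra.smul_mem _
      (monomial_one_mem_adjoin_of_weight_eq_zero hw (hp (mem_support_iff.1 hm))) _
  · have : SetLike.GradedMonoid (weightedHomogeneousSubmodule R w) :=
      WeightedHomogeneousSubmodule.gradedMonoid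
    change Algebra.adjoin R _ ≤ SetLike.GradeZero.subalgebra (weightedHomogeneousSubmodule R w)
    rw [Algebra.adjoin_le_iff]
    rintro _ (⟨k, hk, rfl⟩ | ⟨i, hi, j, hj, rfl⟩)
    · have := isWeightedHomogeneous_X R w k
      rwa [show w k = 0 from hk] at this
    · have := (isWeightedHomogeneous_X R w i).mul (isWeightedHomogeneous_X R w j)
      rwa [hi, hj, add_neg_cancel] at this

end WeightZero

theorem span_X_mul_X_sub_sup_restrictSupport_eq_top [CommRing R] {i j : σ} (hij : i ≠ j)
    {h : MvPolynomial σ R} (hh : h ∈ supported R {i}ᶜ) :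
    (Ideal.span {X i * X j - h}).restrictScalars R ⊔
      restrictSupport R {m | m i = 0 ∨ m j = 0} = ⊤ := by
  set N := (Ideal.span {X i * X j - h}).restrictScalars R ⊔
    restrictSupport R {m | m i = 0 ∨ m j = 0}
  have hh' : ∀ d ∈ h.support, d i = 0 := fun d hd => by
    by_contra hdi
    exact mem_supported.1 hh
      ((mem_vars_iff_mem_support i).2 ⟨d, hd, Finsupp.mem_support_iff.2 hdi⟩) rfl
  -- induction on the exponent of `X i`, which drops by one when `X i * X j` is replaced by `h`
  have hmonomial (m : σ →₀ ℕ) (c : R) : monomial m c ∈ N := by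
    induction hn : m i using Nat.strong_induction_on generalizing m c with
    | _ n ih =>
      by_cases hm : m i = 0 ∨ m j = 0
      · refine Submodule.mem_sup_right fun d hd => ?_
        rwa [Finset.mem_singleton.1 (support_monomial_subset hd)]
      rw [not_or] at hm
      obtain ⟨m', rfl⟩ := Finsupp.exists_eq_add_single_add_single hij hm.1 hm.2
      have hsplit : monomial (m' + Finsupp.single i 1 + Finsupp.single j 1) c =
          monomial m' c * (X i * X j - h) + monomial m' c * h := by
        rw [monomial_add_single, monomial_add_single]
        ring
      rw [hsplit]
      refine add_mem (Submodule.mem_sup_left ?_) ?_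
      · exact Ideal.mul_mem_left _ _ (Ideal.mem_span_singleton_self _)
      · rw [h.as_sum, Finset.mul_sum]
        refine sum_mem fun d hd => ?_
        rw [monomial_mul]
        refine ih _ ?_ _ _ rfl
        simp [← hn, hh' d hd, hij.symm]
  refine eq_top_iff.2 fun p _ => ?_
  rw [p.as_sum]
  exact sum_mem fun m _ => hmonomial m _

end MvPolynomial

namespace Stmt1

theorem wt_eq_neg_one_or_eq_zero_or_eq_one (k : Fin 8) : wt k = -1 ∨ wt k = 0 ∨ wt k = 1 := by
  fin_cases k <;> decide

theorem π_X_one_mul_X_two : π (X 1 * X 2) = π (X 0) * π (X 3) - 1 := by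
  have : π (X 0 * X 3 - X 1 * X 2 - 1) = 0 :=
    Ideal.Quotient.eq_zero_iff_mem.2 (Ideal.subset_span (by simp))
  simp only [map_sub, map_mul, map_one] at this ⊢
  linear_combination -this

theorem π_X_five_mul_X_six : π (X 5 * X 6) = π (X 4) * π (X 7) - 1 := by
  have : π (X 4 * X 7 - X 5 * X 6 - 1) = 0 :=
    Ideal.Quotient.eq_zero_iff_mem.2 (Ideal.subset_span (by simp))
  simp only [map_sub, map_mul, map_one] at this ⊢
  linear_combination -this

theorem adjoin_image_π_eq_adjoin_gens :
    Algebra.adjoin ℂ (π '' (X '' {k | wt k = 0} ∪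
      Set.image2 (fun i j => X i * X j) {i | wt i = 1} {j | wt j = -1})) =
      Algebra.adjoin ℂ (Set.range gens) := by
  have hgen (i : Fin 6) : gens i ∈ Algebra.adjoin ℂ (Set.range gens) :=
    Algebra.subset_adjoin ⟨i, rfl⟩
  refine le_antisymm (Algebra.adjoin_le ?_) (Algebra.adjoin_mono ?_)
  · rintro _ ⟨_, ⟨k, hk, rfl⟩ | ⟨i, hi, j, hj, rfl⟩, rfl⟩
    · fin_cases k <;> simp [wt] at hk
      exacts [hgen 0, hgen 1, hgen 2, hgen 3]
    · fin_cases i <;> fin_cases j <;> simp [wt] at hi hj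
      · change π (X 1 * X 2) ∈ _
        rw [π_X_one_mul_X_two]
        exact sub_mem (mul_mem (hgen 0) (hgen 1)) (one_mem _)
      · exact hgen 4
      · exact hgen 5
      · change π (X 5 * X 6) ∈ _
        rw [π_X_five_mul_X_six]
        exact sub_mem (mul_mem (hgen 2) (hgen 3)) (one_mem _)
  · rintro _ ⟨i, rfl⟩
    fin_cases i
    · exact ⟨X 0, Or.inl ⟨0, rfl, rfl⟩, rfl⟩
    · exact ⟨X 3, Or.inl ⟨3, rfl, rfl⟩, rfl⟩
    · exact ⟨X 4, Or.inl ⟨4, rfl, rfl⟩, rfl⟩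
    · exact ⟨X 7, Or.inl ⟨7, rfl, rfl⟩, rfl⟩
    · exact ⟨X 1 * X 6, Or.inr ⟨1, rfl, 6, rfl, rfl⟩, rfl⟩
    · exact ⟨X 5 * X 2, Or.inr ⟨5, rfl, 2, rfl, rfl⟩, rfl⟩

-- `ℂ[a₁, d₁, a₂, d₂]`
abbrev B := MvPolynomial (Fin 4) ℂ

noncomputable def g₁ : B := X 0 * X 1 - 1
noncomputable def g₂ : B := X 2 * X 3 - 1

open LaurentPolynomial (T)

noncomputable def laurentPoint : Fin 8 → LaurentPolynomial B :=
  ![.C (X 0), T 1, .C g₁ * T (-1), .C (X 1), .C (X 2), 1, .C g₂, .C (X 3)]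

theorem relIdeal_le_ker_aeval_laurentPoint :
    relIdeal ≤ RingHom.ker (aeval laurentPoint : _ →ₐ[ℂ] LaurentPolynomial B) := by
  rw [relIdeal, Ideal.span_le]
  rintro p (rfl | rfl) <;> simp [laurentPoint, g₁, g₂]

noncomputable def evalLaurentPoint : R →ₐ[ℂ] LaurentPolynomial B :=
  Ideal.Quotient.liftₐ relIdeal (aeval laurentPoint) fun _ ha =>
    relIdeal_le_ker_aeval_laurentPoint ha

theorem evalLaurentPoint_π (p : MvPolynomial (Fin 8) ℂ) :
    evalLaurentPoint (π p) = aeval laurentPoint p :=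
  rfl

theorem evalLaurentPoint_comp_aeval_gens : evalLaurentPoint.comp (aeval gens) =
    aeval ![.C (X 0), .C (X 1), .C (X 2), .C (X 3), .C g₂ * T 1, .C g₁ * T (-1)] := by
  refine algHom_ext fun i => ?_
  fin_cases i <;> simp [gens, evalLaurentPoint_π, laurentPoint]

noncomputable def diagExponents (m : Fin 6 →₀ ℕ) : Fin 4 →₀ ℕ :=
  Finsupp.equivFunOnFinite.symm ![m 0, m 1, m 2, m 3]

theorem monomial_diagExponents (m : Fin 6 →₀ ℕ) (c : ℂ) :
    (monomial (diagExponents m) c : B) =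
      C c * (X 0 ^ m 0 * X 1 ^ m 1 * X 2 ^ m 2 * X 3 ^ m 3) := by
  rw [monomial_eq, Finsupp.prod_fintype _ _ fun i => pow_zero _, Fin.prod_univ_four]
  simp [diagExponents, mul_assoc]

theorem evalLaurentPoint_aeval_gens_monomial (m : Fin 6 →₀ ℕ) (c : ℂ) :
    evalLaurentPoint (aeval gens (monomial m c)) =
      .single ((m 4 : ℤ) - m 5) (monomial (diagExponents m) c * g₂ ^ m 4 * g₁ ^ m 5) := by
  rw [← AlgHom.comp_apply, evalLaurentPoint_comp_aeval_gens, aeval_monomial,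
    Finsupp.prod_fintype _ _ fun i => pow_zero _, Fin.prod_univ_six,
    monomial_diagExponents, LaurentPolynomial.single_eq_C_mul_T, LaurentPolynomial.T_sub]
  simp only [Matrix.cons_val, map_mul, map_pow, mul_pow, LaurentPolynomial.T_pow]
  rw [IsScalarTower.algebraMap_apply ℂ B, mul_one, mul_neg_one]
  change LaurentPolynomial.C (C c) * _ = _
  ring

theorem g₁_ne_zero : g₁ ≠ 0 := fun h => by
  simpa [g₁] using congrArg (eval 0) h

theorem g₂_ne_zero : g₂ ≠ 0 := fun h => by
  simpa [g₂] using congrArg (eval 0) h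

theorem eq_of_diagExponents_eq {m n : Fin 6 →₀ ℕ} (h : diagExponents m = diagExponents n)
    (h4 : m 4 = n 4) (h5 : m 5 = n 5) : m = n := by
  have h' := DFunLike.congr_fun h
  ext i
  fin_cases i
  exacts [h' 0, h' 1, h' 2, h' 3, h4, h5]

theorem eq_zero_of_aeval_gens_eq_zero {r : MvPolynomial (Fin 6) ℂ}
    (hr : r ∈ restrictSupport ℂ {m | m 4 = 0 ∨ m 5 = 0}) (h : aeval gens r = 0) : r = 0 := by
  by_contra hr0
  obtain ⟨m₀, hm₀⟩ := support_nonempty.2 hr0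
  set F := r.support.filter fun m => (m 4 : ℤ) - m 5 = m₀ 4 - m₀ 5
  have hF : ∀ m ∈ F, m 4 = m₀ 4 ∧ m 5 = m₀ 5 := by
    intro m hm
    obtain ⟨hm, hk⟩ := Finset.mem_filter.1 hm
    have : m 4 = 0 ∨ m 5 = 0 := hr hm
    have : m₀ 4 = 0 ∨ m₀ 5 = 0 := hr hm₀
    omega
  have hcoeff : (evalLaurentPoint (aeval gens r)).coeff ((m₀ 4 : ℤ) - m₀ 5) =
      (∑ m ∈ F, monomial (diagExponents m) (coeff m r)) * (g₂ ^ m₀ 4 * g₁ ^ m₀ 5) := by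
    conv_lhs => rw [r.as_sum]
    simp only [map_sum, evalLaurentPoint_aeval_gens_monomial, AddMonoidAlgebra.coeff_sum,
      AddMonoidAlgebra.coeff_single, Finsupp.finsetSum_apply, Finsupp.single_apply]
    rw [← Finset.sum_filter, Finset.sum_mul]
    refine Finset.sum_congr rfl fun m hm => ?_
    rw [(hF m hm).1, (hF m hm).2, mul_assoc]
  have hsum : ∑ m ∈ F, monomial (diagExponents m) (coeff m r) = 0 := by
    rw [h, map_zero, AddMonoidAlgebra.coeff_zero] at hcoeff
    exact (mul_eq_zero.1 hcoeff.symm).resolve_right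
      (mul_ne_zero (pow_ne_zero _ g₂_ne_zero) (pow_ne_zero _ g₁_ne_zero))
  have hm₀F : m₀ ∈ F := Finset.mem_filter.2 ⟨hm₀, rfl⟩
  have := congrArg (coeff (diagExponents m₀)) hsum
  rw [coeff_sum, Finset.sum_eq_single_of_mem m₀ hm₀F, coeff_monomial, if_pos rfl,
    coeff_zero] at this
  · exact mem_support_iff.1 hm₀ this
  · intro m hm hne
    rw [coeff_monomial, if_neg fun h => hne (eq_of_diagExponents_eq h (hF m hm).1 (hF m hm).2)]

theorem aeval_gens_relation :
    aeval gens (X 4 * X 5 - (X 0 * X 1 - 1) * (X 2 * X 3 - 1) : MvPolynomial (Fin 6) ℂ) = 0 := by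
  have h₁ := π_X_one_mul_X_two
  have h₂ := π_X_five_mul_X_six
  simp only [map_sub, map_mul, map_one, aeval_X, gens, Matrix.cons_val] at h₁ h₂ ⊢
  linear_combination π (X 5) * π (X 6) * h₁ + (π (X 0) * π (X 3) - 1) * h₂

theorem ker_aeval_gens :
    RingHom.ker (aeval gens : MvPolynomial (Fin 6) ℂ →ₐ[ℂ] R) =
      Ideal.span {X 4 * X 5 - (X 0 * X 1 - 1) * (X 2 * X 3 - 1)} := by
  refine le_antisymm (fun p hp => ?_) (Ideal.span_le.2 ?_)
  · have hsupp : ((X 0 * X 1 - 1) * (X 2 * X 3 - 1) : MvPolynomial (Fin 6) ℂ) ∈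
        supported ℂ ({4}ᶜ : Set (Fin 6)) := by
      have hX (k : Fin 6) (hk : k ≠ 4) : X k ∈ supported ℂ ({4}ᶜ : Set (Fin 6)) :=
        X_mem_supported.2 hk
      exact mul_mem (sub_mem (mul_mem (hX 0 (by decide)) (hX 1 (by decide))) (one_mem _))
        (sub_mem (mul_mem (hX 2 (by decide)) (hX 3 (by decide))) (one_mem _))
    obtain ⟨q, hq, r, hr, rfl⟩ := Submodule.mem_sup.1 <|
      (span_X_mul_X_sub_sup_restrictSupport_eq_top (j := 5) (by decide) hsupp).ge
        (Submodule.mem_top (x := p))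
    have hq0 : aeval gens q = 0 := by
      obtain ⟨a, rfl⟩ := Ideal.mem_span_singleton'.1 hq
      rw [map_mul, aeval_gens_relation, mul_zero]
    rw [RingHom.mem_ker, map_add, hq0, zero_add] at hp
    rwa [eq_zero_of_aeval_gens_eq_zero hr hp, add_zero]
  · rintro _ rfl
    exact aeval_gens_relation

/-- The invariant ring `R₀` (weight-zero part of `R`) is generated by
`a₁, d₁, a₂, d₂, b₁c₂, b₂c₁`, and the only relation among these generators is
`(b₁c₂)(b₂c₁) = (a₁d₁−1)(a₂d₂−1)`. -/
theorem stmt_1 :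
    Submodule.map π.toLinearMap (weightedHomogeneousSubmodule ℂ wt 0) =
      Subalgebra.toSubmodule (Algebra.adjoin ℂ (Set.range gens)) ∧
    RingHom.ker (MvPolynomial.aeval gens : MvPolynomial (Fin 6) ℂ →ₐ[ℂ] R) =
      Ideal.span {(X 4 * X 5 - (X 0 * X 1 - 1) * (X 2 * X 3 - 1) :
        MvPolynomial (Fin 6) ℂ)} := by
  refine ⟨?_, ker_aeval_gens⟩
  rw [weightedHomogeneousSubmodule_zero_eq_adjoin wt_eq_neg_one_or_eq_zero_or_eq_one,
    ← Subalgebra.map_toSubmodule, AlgHom.map_adjoin, adjoin_image_π_eq_adjoin_gens]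

end Stmt1
end

section
/- The affine cubic surface in ℂ³ defined by x₁x₂x₃ + x₁² + x₂² + s₀x₁ + s₁x₂ + 1 = 0, for fixed parameters s₀, s₁ ∈ ℂ, is singular at some point if and only if s₀ = ±2 or s₁ = ±2. Moreover if s₀ = ε₀·2 and s₁ ≠ ±2 (ε₀ ∈ {±1}) there is exactly one singular point, and if both s₀ = ±2 and s₁ = ±2 there are exactly two singular points, all of type A₁. -/
/-!
On the singular locus `∂F/∂x₃ = x₁x₂ = 0`. If `x₂ = 0`, the equation `∂F/∂x₁ = 0` gives
`x₁ = -s₀/2`; then `F = 0` becomes `1 - s₀²/4 = 0` and `∂F/∂x₂ = 0` gives `x₃ = s₀s₁/2`.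
The case `x₁ = 0` is the same with `(x₁, s₀)` and `(x₂, s₁)` exchanged. So the singular points
are `(-s₀/2, 0, s₀s₁/2)` when `s₀ = ±2` and `(0, -s₁/2, s₀s₁/2)` when `s₁ = ±2`, and at each of
them the Hessian determinant `2x₁x₂x₃ - 2x₁² - 2x₂²` equals `-2`.
-/

open MvPolynomial

/-- The family of cubic surfaces `x₁x₂x₃ + x₁² + x₂² + s₀x₁ + s₁x₂ + 1 = 0`
(monodromy spaces for degenerate Painlevé V). -/
noncomputable def cubicPVdeg (s₀ s₁ : ℂ) : MvPolynomial (Fin 3) ℂ :=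
  X 0 * X 1 * X 2 + X 0 ^ 2 + X 1 ^ 2 + C s₀ * X 0 + C s₁ * X 1 + 1

/-- A singular point of an affine surface `F = 0` in `ℂ³`: a common zero of `F`
and its three partial derivatives. -/
def SingPt (F : MvPolynomial (Fin 3) ℂ) (p : Fin 3 → ℂ) : Prop :=
  eval p F = 0 ∧ ∀ i : Fin 3, eval p (pderiv i F) = 0

/-- Type `A₁` (ordinary double point): the Hessian at the point is nondegenerate. -/
def IsA1 (F : MvPolynomial (Fin 3) ℂ) (p : Fin 3 → ℂ) : Prop :=
  (Matrix.of fun i j : Fin 3 => eval p (pderiv i (pderiv j F))).det ≠ 0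

theorem singPt_cubicPVdeg_iff_eqns {s₀ s₁ : ℂ} {p : Fin 3 → ℂ} :
    SingPt (cubicPVdeg s₀ s₁) p ↔
      p 0 * p 1 * p 2 + p 0 ^ 2 + p 1 ^ 2 + s₀ * p 0 + s₁ * p 1 + 1 = 0 ∧
      p 1 * p 2 + 2 * p 0 + s₀ = 0 ∧ p 0 * p 2 + 2 * p 1 + s₁ = 0 ∧ (p 0 = 0 ∨ p 1 = 0) := by
  simp only [SingPt, Fin.forall_fin_succ, IsEmpty.forall_iff, and_true, cubicPVdeg, map_add,
    map_mul, map_pow, map_one, eval_X, eval_C, Derivation.leibniz, Derivation.leibniz_pow,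
    pderiv_X, pderiv_C, smul_eq_mul, Pi.single_apply]
  norm_num [Fin.ext_iff, mul_comm (p 2)]

theorem sq_eq_four_iff {R : Type*} [CommRing R] [NoZeroDivisors R] {s : R} :
    s ^ 2 = 4 ↔ s = 2 ∨ s = -2 := by
  rw [show (4 : R) = 2 ^ 2 by norm_num, sq_eq_sq_iff_eq_or_eq_neg]

theorem critical_eqns_of_eq_zero {K : Type*} [Field K] [CharZero K] {a b c s t : K} (hb : b = 0)
    (hF : a * b * c + a ^ 2 + b ^ 2 + s * a + t * b + 1 = 0) (ha : b * c + 2 * a + s = 0)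
    (hc : a * c + 2 * b + t = 0) : s ^ 2 = 4 ∧ a = -s / 2 ∧ c = s * t / 2 := by
  subst hb
  have ha' : a = -s / 2 := by linear_combination ha / 2
  have hs : s ^ 2 = 4 := by subst ha'; linear_combination -4 * hF
  refine ⟨hs, ha', ?_⟩
  subst ha'
  linear_combination (-s / 2) * hc - c / 4 * hs

open Matrix in
theorem singPt_cubicPVdeg_iff {s₀ s₁ : ℂ} {p : Fin 3 → ℂ} :
    SingPt (cubicPVdeg s₀ s₁) p ↔
      (s₀ ^ 2 = 4 ∧ p = ![-s₀ / 2, 0, s₀ * s₁ / 2]) ∨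
      (s₁ ^ 2 = 4 ∧ p = ![0, -s₁ / 2, s₀ * s₁ / 2]) := by
  rw [singPt_cubicPVdeg_iff_eqns]
  constructor
  · rintro ⟨hF, h₀, h₁, hp₀ | hp₁⟩
    · obtain ⟨hs, ha, hc⟩ := critical_eqns_of_eq_zero hp₀ (by linear_combination hF) h₁ h₀
      refine Or.inr ⟨hs, ?_⟩
      ext i; fin_cases i <;> simp [hp₀, ha, hc, mul_comm]
    · obtain ⟨hs, ha, hc⟩ := critical_eqns_of_eq_zero hp₁ hF h₀ h₁
      refine Or.inl ⟨hs, ?_⟩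
      ext i; fin_cases i <;> simp [hp₁, ha, hc]
  · rintro (⟨hs, rfl⟩ | ⟨hs, rfl⟩) <;>
      simp only [cons_val_zero, cons_val_one, cons_val_two, tail_cons, head_cons]
    · exact ⟨by linear_combination (-1 / 4 : ℂ) * hs, by ring,
        by linear_combination (-s₁ / 4) * hs, by simp⟩
    · exact ⟨by linear_combination (-1 / 4 : ℂ) * hs, by linear_combination (-s₀ / 4) * hs,
        by ring, by simp⟩

theorem det_hessian_cubicPVdeg (s₀ s₁ : ℂ) (p : Fin 3 → ℂ) :
    (Matrix.of fun i j : Fin 3 => eval p (pderiv i (pderiv j (cubicPVdeg s₀ s₁)))).det =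
      2 * p 0 * p 1 * p 2 - 2 * p 0 ^ 2 - 2 * p 1 ^ 2 := by
  simp only [Matrix.det_fin_three, Matrix.of_apply, cubicPVdeg, sq, map_add, map_mul,
    eval_X, eval_C, Derivation.leibniz, pderiv_X, pderiv_C, smul_eq_mul, Pi.single_apply]
  norm_num [Fin.ext_iff]
  ring

open Matrix in
theorem isA1_of_singPt {s₀ s₁ : ℂ} {p : Fin 3 → ℂ} (hp : SingPt (cubicPVdeg s₀ s₁) p) :
    IsA1 (cubicPVdeg s₀ s₁) p := by
  have hdet : 2 * p 0 * p 1 * p 2 - 2 * p 0 ^ 2 - 2 * p 1 ^ 2 = -2 := by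
    rcases singPt_cubicPVdeg_iff.1 hp with ⟨hs, rfl⟩ | ⟨hs, rfl⟩ <;>
      simp only [cons_val_zero, cons_val_one, cons_val_two, tail_cons, head_cons]
    · linear_combination (-1 / 2 : ℂ) * hs
    · linear_combination (-1 / 2 : ℂ) * hs
  rw [IsA1, det_hessian_cubicPVdeg, hdet]
  norm_num

/-- The cubic surface `x₁x₂x₃ + x₁² + x₂² + s₀x₁ + s₁x₂ + 1 = 0` is singular iff
`s₀ = ±2` or `s₁ = ±2`; if `s₀ = ±2` and `s₁ ≠ ±2` there is exactly one singular
point; if `s₀ = ±2` and `s₁ = ±2` there are exactly two singular points; and all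
singular points are of type `A₁`. -/
theorem stmt_3 (s₀ s₁ : ℂ) :
    ((∃ p, SingPt (cubicPVdeg s₀ s₁) p) ↔ (s₀ = 2 ∨ s₀ = -2 ∨ s₁ = 2 ∨ s₁ = -2)) ∧
    ((s₀ = 2 ∨ s₀ = -2) → s₁ ≠ 2 → s₁ ≠ -2 →
      (∃! p, SingPt (cubicPVdeg s₀ s₁) p) ∧
      ∀ p, SingPt (cubicPVdeg s₀ s₁) p → IsA1 (cubicPVdeg s₀ s₁) p) ∧
    ((s₀ = 2 ∨ s₀ = -2) → (s₁ = 2 ∨ s₁ = -2) →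
      (∃ p q, p ≠ q ∧ SingPt (cubicPVdeg s₀ s₁) p ∧ SingPt (cubicPVdeg s₀ s₁) q ∧
        ∀ r, SingPt (cubicPVdeg s₀ s₁) r → r = p ∨ r = q) ∧
      ∀ p, SingPt (cubicPVdeg s₀ s₁) p → IsA1 (cubicPVdeg s₀ s₁) p) := by
  refine ⟨?_, fun h₀ hne hne' => ⟨?_, fun _ => isA1_of_singPt⟩,
    fun h₀ h₁ => ⟨?_, fun _ => isA1_of_singPt⟩⟩
  · simp only [singPt_cubicPVdeg_iff, exists_or, exists_and_left, exists_eq, and_true,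
      sq_eq_four_iff, or_assoc]
  · have hs₁ : s₁ ^ 2 ≠ 4 := by rw [Ne, sq_eq_four_iff]; tauto
    simp only [singPt_cubicPVdeg_iff, sq_eq_four_iff.2 h₀, hs₁, true_and, false_and, or_false]
    exact existsUnique_eq
  · have hs₀ := sq_eq_four_iff.2 h₀
    refine ⟨_, _, ?_, singPt_cubicPVdeg_iff.2 (Or.inl ⟨hs₀, rfl⟩),
      singPt_cubicPVdeg_iff.2 (Or.inr ⟨sq_eq_four_iff.2 h₁, rfl⟩),
      fun r hr => (singPt_cubicPVdeg_iff.1 hr).imp And.right And.right⟩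
    intro h
    have hs₀_zero : s₀ = 0 := by simpa using congrFun h 0
    norm_num [hs₀_zero] at hs₀
end

section
/- If matrices M₁,…,M₆ are the Stokes matrices M₁ = [[1,0],[b₁,1]], M₂ = [[1,b₂],[0,1]], …, M₆ = [[1,b₆],[0,1]] (lower/upper triangular alternating) and Γ = diag(α, α⁻¹), and Γ·M₁·M₂·M₃·M₄·M₅·M₆ = I, then α = b₃b₆ + (1+b₃b₄)(1+b₅b₆). -/
open Matrix

/-- If `diag(α,α⁻¹) · M₁ ⋯ M₆ = 1` for the alternating unipotent Stokes matrices
`M₁ = [[1,0],[b₁,1]], M₂ = [[1,b₂],[0,1]], …, M₆ = [[1,b₆],[0,1]]`, then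
`α = b₃b₆ + (1+b₃b₄)(1+b₅b₆)`. -/
theorem stmt_8 (α b₁ b₂ b₃ b₄ b₅ b₆ : ℂ) (hα : α ≠ 0)
    (h : (!![α, 0; 0, α⁻¹] * !![1, 0; b₁, 1] * !![1, b₂; 0, 1] * !![1, 0; b₃, 1] *
        !![1, b₄; 0, 1] * !![1, 0; b₅, 1] * !![1, b₆; 0, 1] :
          Matrix (Fin 2) (Fin 2) ℂ) = 1) :
    α = b₃ * b₆ + (1 + b₃ * b₄) * (1 + b₅ * b₆) := by
  have e1 := congrFun (congrFun h 0) 1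
  have e2 := congrFun (congrFun h 1) 1
  simp [Matrix.mul_apply, Fin.sum_univ_two, Matrix.one_apply] at e1 e2
  field_simp at e2
  have e1' : b₂ + b₂ * b₃ * b₄ + b₂ * b₃ * b₄ * b₅ * b₆ + b₂ * b₃ * b₆ + b₂ * b₅ * b₆ +
      b₄ + b₄ * b₅ * b₆ + b₆ = 0 :=
    mul_left_cancel₀ hα (by linear_combination e1)
  linear_combination b₁ * e1' - e2
end

section
/- Let f ∈ ℂ[z] be a polynomial of degree 3. There is no matrix A ∈ GL₂(ℂ[z]) with det A a nonzero constant such that A⁻¹A′ + A⁻¹·[[0,f],[1,0]]·A is a polynomial matrix of degree ≤ 2. -/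
open Matrix Polynomial

private lemma key_rh (f : Polynomial ℂ) (hf : f.degree = 3) (a p : Polynomial ℂ)
    (hp : p ≠ 0) :
    ¬ (a * derivative p - p * derivative a + (a ^ 2 - f * p ^ 2)).degree ≤ 2 := by
  intro h
  set n := p.natDegree with hn
  set m := a.natDegree with hm
  have hpdeg : p.degree = (n : ℕ) := degree_eq_natDegree hp
  have hfp : (f * p ^ 2).degree = ((3 + 2 * n : ℕ) : WithBot ℕ) := by
    rw [sq, degree_mul, degree_mul, hf, hpdeg]
    push_cast; ring
  have hW1 : (a * derivative p).degree ≤ ((m + n : ℕ) : WithBot ℕ) := by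
    calc (a * derivative p).degree ≤ a.degree + (derivative p).degree := degree_mul_le _ _
      _ ≤ (m : WithBot ℕ) + (n : WithBot ℕ) :=
          add_le_add degree_le_natDegree
            ((degree_derivative_le).trans (degree_le_natDegree))
      _ = ((m + n : ℕ) : WithBot ℕ) := by push_cast; ring
  have hW2 : (p * derivative a).degree ≤ ((m + n : ℕ) : WithBot ℕ) := by
    calc (p * derivative a).degree ≤ p.degree + (derivative a).degree := degree_mul_le _ _
      _ ≤ (n : WithBot ℕ) + (m : WithBot ℕ) :=
          add_le_add degree_le_natDegree
            ((degree_derivative_le).trans (degree_le_natDegree))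
      _ = ((m + n : ℕ) : WithBot ℕ) := by push_cast; ring
  have hW : (a * derivative p - p * derivative a).degree ≤ ((m + n : ℕ) : WithBot ℕ) :=
    (degree_sub_le _ _).trans (max_le hW1 hW2)
  have ha2le : (a ^ 2).degree ≤ ((m + m : ℕ) : WithBot ℕ) := by
    calc (a ^ 2).degree = (a * a).degree := by rw [sq]
      _ ≤ a.degree + a.degree := degree_mul_le _ _
      _ ≤ (m : WithBot ℕ) + (m : WithBot ℕ) := add_le_add degree_le_natDegree degree_le_natDegree
      _ = ((m + m : ℕ) : WithBot ℕ) := by push_cast; ring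
  by_cases hcase : m ≤ n + 1
  · have hlt : (a * derivative p - p * derivative a + a ^ 2).degree < (f * p ^ 2).degree := by
      rw [hfp]
      refine lt_of_le_of_lt (degree_add_le _ _) (max_lt ?_ ?_)
      · exact lt_of_le_of_lt hW (by exact_mod_cast (by omega : m + n < 3 + 2 * n))
      · exact lt_of_le_of_lt ha2le (by exact_mod_cast (by omega : m + m < 3 + 2 * n))
    have heq : a * derivative p - p * derivative a + (a ^ 2 - f * p ^ 2)
        = (a * derivative p - p * derivative a + a ^ 2) - f * p ^ 2 := by ring
    rw [heq, degree_sub_eq_right_of_degree_lt hlt, hfp] at h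
    have : (3 + 2 * n : ℕ) ≤ 2 := by exact_mod_cast h
    omega
  · have ha : a ≠ 0 := by
      intro h0
      rw [hm, h0, natDegree_zero] at hcase
      omega
    have ha2 : (a ^ 2).degree = ((m + m : ℕ) : WithBot ℕ) := by
      rw [sq, degree_mul, degree_eq_natDegree ha, ← hm]
      push_cast; ring
    have hlt : (a * derivative p - p * derivative a - f * p ^ 2).degree < (a ^ 2).degree := by
      rw [ha2]
      refine lt_of_le_of_lt (degree_sub_le _ _) (max_lt ?_ ?_)
      · exact lt_of_le_of_lt hW (by exact_mod_cast (by omega : m + n < m + m))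
      · rw [hfp]
        exact_mod_cast (by omega : 3 + 2 * n < m + m)
    have heq : a * derivative p - p * derivative a + (a ^ 2 - f * p ^ 2)
        = a ^ 2 + (a * derivative p - p * derivative a - f * p ^ 2) := by ring
    rw [heq, degree_add_eq_left_of_degree_lt hlt, ha2] at h
    have : (m + m : ℕ) ≤ 2 := by exact_mod_cast h
    omega

/-- For `f ∈ ℂ[z]` of degree 3, there is no `A ∈ GL₂(ℂ[z])` (i.e. with `det A` a
nonzero constant) such that `A⁻¹A′ + A⁻¹·[[0,f],[1,0]]·A` has polynomial entries of
degree ≤ 2: the strong Riemann–Hilbert problem fails for `d/dz + [[0,f],[1,0]]`. -/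
theorem stmt_12 (f : Polynomial ℂ) (hf : f.degree = 3) :
    ¬ ∃ A : Matrix (Fin 2) (Fin 2) (Polynomial ℂ),
        (∃ c : ℂ, c ≠ 0 ∧ A.det = C c) ∧
        ∀ i j : Fin 2,
          ((A⁻¹ * A.map derivative + A⁻¹ * !![0, f; 1, 0] * A) i j).degree ≤ 2 := by
  rintro ⟨A, ⟨c, hc, hdet⟩, hB⟩
  have hAinv : A⁻¹ = C c⁻¹ • A.adjugate := by
    apply Matrix.inv_eq_left_inv
    rw [Matrix.smul_mul, Matrix.adjugate_mul, hdet, smul_smul, ← C_mul,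
      inv_mul_cancel₀ hc, C_1, one_smul]
  have hM : ∀ i j, ((A.adjugate * A.map derivative + A.adjugate * !![0, f; 1, 0] * A) i j).degree ≤ 2 := by
    intro i j
    have hb := hB i j
    rw [hAinv, Matrix.smul_mul, Matrix.smul_mul, Matrix.smul_mul, ← smul_add,
      Matrix.smul_apply, smul_eq_mul, degree_mul, degree_C (inv_ne_zero hc), zero_add] at hb
    exact hb
  have h10 := hM 1 0
  have h01 := hM 0 1
  rw [Matrix.adjugate_fin_two] at h10 h01
  have e10 : (!![A 1 1, -A 0 1; -A 1 0, A 0 0] * A.map derivative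
      + !![A 1 1, -A 0 1; -A 1 0, A 0 0] * !![0, f; 1, 0] * A) 1 0
      = A 0 0 * derivative (A 1 0) - A 1 0 * derivative (A 0 0)
        + ((A 0 0) ^ 2 - f * (A 1 0) ^ 2) := by
    simp [Matrix.mul_apply, Fin.sum_univ_two, Matrix.map_apply, Matrix.vecMul,
      dotProduct, Matrix.vecHead, Matrix.vecTail]
    ring
  have e01 : (!![A 1 1, -A 0 1; -A 1 0, A 0 0] * A.map derivative
      + !![A 1 1, -A 0 1; -A 1 0, A 0 0] * !![0, f; 1, 0] * A) 0 1
      = -(A 0 1 * derivative (A 1 1) - A 1 1 * derivative (A 0 1)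
        + ((A 0 1) ^ 2 - f * (A 1 1) ^ 2)) := by
    simp [Matrix.mul_apply, Fin.sum_univ_two, Matrix.map_apply, Matrix.vecMul,
      dotProduct, Matrix.vecHead, Matrix.vecTail]
    ring
  rw [e10] at h10
  rw [e01, degree_neg] at h01
  have hp : A 1 0 = 0 := by
    by_contra hp0
    exact key_rh f hf (A 0 0) (A 1 0) hp0 h10
  have hq : A 1 1 = 0 := by
    by_contra hq0
    exact key_rh f hf (A 0 1) (A 1 1) hq0 h01
  rw [Matrix.det_fin_two, hp, hq] at hdet
  rw [mul_zero, mul_zero, sub_zero] at hdet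
  exact hc (C_eq_zero.mp hdet.symm)
end

section
/- Let R₁ = (s₃ + s₃⁻¹)² − s₁s₂(s₃ + s₃⁻¹) + s₁² + s₂² − 4 in ℂ[s₁,s₂,s₃,s₃⁻¹]. The ℂ-algebra homomorphism ℂ[s₁,s₂,s₃,s₃⁻¹]/(R₁) → ℂ[x₁,x₁⁻¹,x₂,x₂⁻¹] given by s₁ ↦ x₁ + x₁⁻¹, s₂ ↦ x₂ + x₂⁻¹, s₃ ↦ x₁x₂ is well-defined and injective, identifying the source with the subring ℂ[x₁+x₁⁻¹, x₂+x₂⁻¹, x₁x₂, x₁⁻¹x₂⁻¹]. -/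
/-!
Multiplying `R₁` by `s₃²` gives a monic quartic `q(s₃)` over `A = ℂ[s₁, s₂]` with constant
term `1`, so `s₃⁻¹` is a polynomial in `s₃` modulo `R₁` and every class of `S ⧸ (R₁)` is
represented by a polynomial `∑ᵢ aᵢ s₃ⁱ` of degree `< 4`. Its image `∑ᵢ aᵢ(x₁ + x₁⁻¹, x₂ + x₂⁻¹)
(x₁x₂)ⁱ` has coefficients fixed by the four substitutions `xⱼ ↦ xⱼ^{±1}`, which move `x₁x₂` to
the four distinct monomials `x₁^{±1}x₂^{±1}`; a Vandermonde argument kills the coefficients, and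
`A → ℂ[x₁^{±1}, x₂^{±1}]` is injective because `z ↦ z + z⁻¹` maps `ℂˣ` onto `ℂ`.
-/

open LaurentPolynomial

namespace Stmt13

/-- The ring `ℂ[s₁,s₂][s₃,s₃⁻¹]`. -/
noncomputable abbrev S := LaurentPolynomial (MvPolynomial (Fin 2) ℂ)

/-- The ring `ℂ[x₁,x₁⁻¹][x₂,x₂⁻¹]`. -/
noncomputable abbrev Tgt := LaurentPolynomial (LaurentPolynomial ℂ)

noncomputable def s₁ : S := LaurentPolynomial.C (MvPolynomial.X 0)
noncomputable def s₂ : S := LaurentPolynomial.C (MvPolynomial.X 1)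
noncomputable def s₃ : S := LaurentPolynomial.T 1
noncomputable def s₃inv : S := LaurentPolynomial.T (-1)

/-- `R₁ = (s₃ + s₃⁻¹)² − s₁s₂(s₃ + s₃⁻¹) + s₁² + s₂² − 4`. -/
noncomputable def R₁ : S :=
  (s₃ + s₃inv) ^ 2 - s₁ * s₂ * (s₃ + s₃inv) + s₁ ^ 2 + s₂ ^ 2 - 4

noncomputable def x₁ : Tgt := LaurentPolynomial.C (LaurentPolynomial.T 1)
noncomputable def x₁inv : Tgt := LaurentPolynomial.C (LaurentPolynomial.T (-1))
noncomputable def x₂ : Tgt := LaurentPolynomial.T 1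
noncomputable def x₂inv : Tgt := LaurentPolynomial.T (-1)

noncomputable def mk : S →ₐ[ℂ] S ⧸ Ideal.span {R₁} :=
  Ideal.Quotient.mkₐ ℂ (Ideal.span {R₁})

end Stmt13

open scoped Polynomial
open Polynomial (toLaurent)

namespace LaurentPolynomial

section Lift

variable {k R B : Type*} [CommSemiring k] [CommSemiring R] [Algebra k R] [CommSemiring B]
  [Algebra k B]

noncomputable def eval₂AlgHom (f : R →ₐ[k] B) (x : Bˣ) : R[T;T⁻¹] →ₐ[k] B :=
  { eval₂ (f : R →+* B) x with
    commutes' := fun c => by simp [algebraMap_apply] }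

@[simp]
theorem eval₂AlgHom_apply (f : R →ₐ[k] B) (x : Bˣ) (p : R[T;T⁻¹]) :
    eval₂AlgHom f x p = eval₂ (f : R →+* B) x p :=
  rfl

end Lift

theorem adjoin_image_C_union_T_eq_top {k R : Type*} [CommSemiring k] [CommSemiring R]
    [Algebra k R] {s : Set R} (hs : Algebra.adjoin k s = ⊤) :
    Algebra.adjoin k (C '' s ∪ {T 1, T (-1)}) = ⊤ := by
  set A := Algebra.adjoin k (C '' s ∪ {T 1, T (-1)} : Set R[T;T⁻¹])
  have hC (a : R) : C a ∈ A := by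
    have ha : a ∈ Algebra.adjoin k s := hs ▸ trivial
    induction ha using Algebra.adjoin_induction with
    | mem a ha => exact Algebra.subset_adjoin (Or.inl ⟨a, ha, rfl⟩)
    | algebraMap c => exact Subalgebra.algebraMap_mem A c
    | add a b _ _ ha hb => rw [map_add]; exact add_mem ha hb
    | mul a b _ _ ha hb => rw [map_mul]; exact mul_mem ha hb
  have hT (n : ℤ) : T n ∈ A := by
    induction n using Int.induction_on with
    | zero => rw [T_zero]; exact one_mem A
    | succ n ih => rw [T_add]; exact mul_mem ih (Algebra.subset_adjoin (by simp))
    | pred n ih => rw [sub_eq_add_neg, T_add]; exact mul_mem ih (Algebra.subset_adjoin (by simp))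
  rw [eq_top_iff]
  rintro f -
  induction f using LaurentPolynomial.induction_on' with
  | add p q hp hq => exact add_mem hp hq
  | C_mul_T n a => exact mul_mem (hC a) (hT n)

theorem exists_sub_toLaurent_mem_span_toLaurent {R : Type*} [CommRing R] {g : R[X]}
    (hg : g.Monic) (hg1 : g ≠ 1) (h0 : IsUnit (g.coeff 0)) (f : R[T;T⁻¹]) :
    ∃ p : R[X], p.natDegree < g.natDegree ∧ f - toLaurent p ∈ Ideal.span {toLaurent g} := by
  set π := Ideal.Quotient.mk (Ideal.span {toLaurent g})
  obtain ⟨u, hu⟩ := h0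
  -- `g = X * g.divX + u` exhibits `T (-1)` as a polynomial modulo `g`
  set h : R[X] := -(Polynomial.C (↑u⁻¹ : R) * g.divX)
  have hinv : π (T (-1)) = π (toLaurent h) := by
    have hg' : toLaurent g = T 1 * toLaurent g.divX + C (u : R) := by
      conv_lhs => rw [← Polynomial.X_mul_divX_add g, ← hu]
      simp only [map_add, map_mul, Polynomial.toLaurent_X, Polynomial.toLaurent_C]
    have key : T (-1) - toLaurent h = C (↑u⁻¹ : R) * T (-1) * toLaurent g := by
      have hT : (T (-1) * T 1 : R[T;T⁻¹]) = 1 := by rw [← T_add]; rfl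
      have hC : C (↑u⁻¹ : R) * C (u : R) = 1 := by rw [← map_mul, Units.inv_mul, map_one]
      simp only [h, hg', map_neg, map_mul, Polynomial.toLaurent_C]
      linear_combination (-T (-1)) * hC - C (↑u⁻¹ : R) * toLaurent g.divX * hT
    exact Ideal.Quotient.eq.2 (key ▸ Ideal.mul_mem_left _ _ (Ideal.mem_span_singleton_self _))
  have hpow (n : ℕ) : π (T (-n)) = π (toLaurent (h ^ n)) := by
    rw [map_pow, map_pow, ← hinv, ← map_pow, T_pow, mul_neg_one]
  obtain ⟨n, F, hF⟩ := f.exists_T_pow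
  have hf : f = toLaurent F * T (-n) := by
    rw [hF, mul_assoc, ← T_add, add_neg_cancel, T_zero, mul_one]
  refine ⟨(F * h ^ n) %ₘ g, Polynomial.natDegree_modByMonic_lt _ hg hg1, ?_⟩
  rw [← Ideal.Quotient.eq_zero_iff_mem, map_sub, sub_eq_zero, hf, map_mul, hpow, ← map_mul,
    ← map_mul, Polynomial.modByMonic_eq_sub_mul_div]
  simp

end LaurentPolynomial

theorem Matrix.eq_zero_of_sum_mul_pow_eq_zero_of_forall_fixed {B : Type*} [CommRing B]
    [IsDomain B] {n : ℕ} (σ : Fin n → B →+* B) {y : B} (hy : Function.Injective fun j ↦ σ j y)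
    {c : Fin n → B} (hc : ∀ i j, σ j (c i) = c i) (h : ∑ i, c i * y ^ (i : ℕ) = 0) : c = 0 := by
  refine Matrix.eq_zero_of_forall_index_sum_mul_pow_eq_zero hy fun j ↦ ?_
  simpa [map_sum, hc] using congrArg (σ j) h

theorem Complex.exists_unit_add_inv_eq (u : ℂ) : ∃ z : ℂˣ, (z + z⁻¹ : ℂ) = u := by
  obtain ⟨w, hw⟩ := Complex.cos_surjective (u / 2)
  refine ⟨Units.mk0 _ (Complex.exp_ne_zero (w * Complex.I)), ?_⟩
  simp only [Units.val_inv_eq_inv_val, Units.val_mk0, ← Complex.exp_neg, ← neg_mul,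
    ← Complex.two_cos, hw]
  ring

namespace Stmt13

open MvPolynomial (aeval)

theorem x₁_mul_x₁inv : x₁ * x₁inv = 1 := by rw [x₁, x₁inv, ← map_mul, ← T_add]; simp

theorem x₂_mul_x₂inv : x₂ * x₂inv = 1 := by rw [x₂, x₂inv, ← T_add]; simp

noncomputable def X₁ : Tgtˣ := ⟨x₁, x₁inv, x₁_mul_x₁inv, (mul_comm _ _).trans x₁_mul_x₁inv⟩

noncomputable def X₂ : Tgtˣ := ⟨x₂, x₂inv, x₂_mul_x₂inv, (mul_comm _ _).trans x₂_mul_x₂inv⟩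

@[simp] theorem coe_X₁ : (X₁ : Tgt) = x₁ := rfl
@[simp] theorem coe_X₁_inv : ((X₁⁻¹ : Tgtˣ) : Tgt) = x₁inv := rfl
@[simp] theorem coe_X₂ : (X₂ : Tgt) = x₂ := rfl
@[simp] theorem coe_X₂_inv : ((X₂⁻¹ : Tgtˣ) : Tgt) = x₂inv := rfl

noncomputable def ev : MvPolynomial (Fin 2) ℂ →ₐ[ℂ] Tgt := aeval ![x₁ + x₁inv, x₂ + x₂inv]

noncomputable def ψ : S →ₐ[ℂ] Tgt := eval₂AlgHom ev (X₁ * X₂)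

theorem ψ_s₁ : ψ s₁ = x₁ + x₁inv := by simp [ψ, s₁, ev]
theorem ψ_s₂ : ψ s₂ = x₂ + x₂inv := by simp [ψ, s₂, ev]
theorem ψ_s₃ : ψ s₃ = x₁ * x₂ := by simp [ψ, s₃, X₁, X₂]
theorem ψ_s₃inv : ψ s₃inv = x₁inv * x₂inv := by simp [ψ, s₃inv, X₁, X₂, mul_comm]

theorem ψ_R₁ : ψ R₁ = 0 := by
  simp only [R₁, map_add, map_sub, map_mul, map_pow, map_ofNat, ψ_s₁, ψ_s₂, ψ_s₃, ψ_s₃inv]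
  linear_combination (2 - x₂ ^ 2 - x₂inv ^ 2) * x₁_mul_x₁inv
    + (2 - x₁ ^ 2 - x₁inv ^ 2) * x₂_mul_x₂inv

section EvalUnits

variable {B : Type*} [CommRing B] [Algebra ℂ B]

noncomputable def evalUnits (u v : Bˣ) : Tgt →ₐ[ℂ] B :=
  eval₂AlgHom (eval₂AlgHom (Algebra.ofId ℂ B) u) v

variable (u v : Bˣ)

@[simp] theorem evalUnits_x₁ : evalUnits u v x₁ = u := by simp [evalUnits, x₁]
@[simp] theorem evalUnits_x₁inv : evalUnits u v x₁inv = ↑u⁻¹ := by simp [evalUnits, x₁inv]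
@[simp] theorem evalUnits_x₂ : evalUnits u v x₂ = v := by simp [evalUnits, x₂]
@[simp] theorem evalUnits_x₂inv : evalUnits u v x₂inv = ↑v⁻¹ := by simp [evalUnits, x₂inv]

theorem evalUnits_comp_ev :
    (evalUnits u v).comp ev = aeval ![(u : B) + ↑u⁻¹, (v : B) + ↑v⁻¹] := by
  ext i
  fin_cases i <;> simp [ev]

end EvalUnits

theorem evalUnits_ev {u v : Tgtˣ} (hu : (u + u⁻¹ : Tgt) = x₁ + x₁inv)
    (hv : (v + v⁻¹ : Tgt) = x₂ + x₂inv) (a : MvPolynomial (Fin 2) ℂ) :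
    evalUnits u v (ev a) = ev a := by
  rw [← AlgHom.comp_apply, evalUnits_comp_ev, hu, hv, ev]

theorem ev_injective : Function.Injective ev := by
  refine (injective_iff_map_eq_zero ev).2 fun a ha ↦ MvPolynomial.funext fun x ↦ ?_
  obtain ⟨z, hz⟩ := Complex.exists_unit_add_inv_eq (x 0)
  obtain ⟨w, hw⟩ := Complex.exists_unit_add_inv_eq (x 1)
  have hx : x = ![(z : ℂ) + ↑z⁻¹, (w : ℂ) + ↑w⁻¹] := by
    ext i; fin_cases i <;> simp [← hz, ← hw]
  rw [map_zero, hx, ← MvPolynomial.aeval_eq_eval, ← evalUnits_comp_ev, AlgHom.comp_apply,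
    ha, map_zero]

noncomputable def flips : Fin 4 → Tgt →ₐ[ℂ] Tgt :=
  ![evalUnits X₁ X₂, evalUnits X₁ X₂⁻¹, evalUnits X₁⁻¹ X₂, evalUnits X₁⁻¹ X₂⁻¹]

theorem flips_ev (j : Fin 4) (a : MvPolynomial (Fin 2) ℂ) : flips j (ev a) = ev a := by
  have h₁ : ((X₁⁻¹ : Tgtˣ) + (X₁⁻¹)⁻¹ : Tgt) = x₁ + x₁inv := by simp [add_comm]
  have h₂ : ((X₂⁻¹ : Tgtˣ) + (X₂⁻¹)⁻¹ : Tgt) = x₂ + x₂inv := by simp [add_comm]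
  fin_cases j <;> simp only [flips, Fin.zero_eta, Fin.mk_one, Fin.reduceFinMk, Matrix.cons_val]
  · exact evalUnits_ev (by simp) (by simp) a
  · exact evalUnits_ev (by simp) h₂ a
  · exact evalUnits_ev h₁ (by simp) a
  · exact evalUnits_ev h₁ h₂ a

theorem flips_x₁_mul_x₂ :
    (fun j ↦ flips j (x₁ * x₂)) = ![x₁ * x₂, x₁ * x₂inv, x₁inv * x₂, x₁inv * x₂inv] := by
  ext1 j
  fin_cases j <;> simp [flips]

theorem flips_x₁_mul_x₂_injective : Function.Injective fun j ↦ flips j (x₁ * x₂) := by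
  rw [flips_x₁_mul_x₂]
  refine .of_comp (f := evalUnits (Units.mk0 (2 : ℂ) two_ne_zero) (Units.mk0 3 three_ne_zero)) ?_
  intro i j hij
  fin_cases i <;> fin_cases j <;> first | rfl | norm_num at hij

theorem eq_zero_of_ψ_toLaurent_eq_zero {p : (MvPolynomial (Fin 2) ℂ)[X]} (hp : p.natDegree < 4)
    (h : ψ (toLaurent p) = 0) : p = 0 := by
  have hsum : ∑ i : Fin 4, ev (p.coeff i) * (x₁ * x₂) ^ (i : ℕ) = 0 := by
    rw [Fin.sum_univ_eq_sum_range (fun i ↦ ev (p.coeff i) * (x₁ * x₂) ^ i), ← h, ψ,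
      eval₂AlgHom_apply, eval₂_toLaurent, Polynomial.eval₂_eq_sum_range' _ hp]
    rfl
  have hc := Matrix.eq_zero_of_sum_mul_pow_eq_zero_of_forall_fixed (fun j ↦ (flips j).toRingHom)
    flips_x₁_mul_x₂_injective (fun i j ↦ flips_ev j _) hsum
  refine Polynomial.ext fun n ↦ ?_
  rcases lt_or_ge n 4 with hn | hn
  · exact (map_eq_zero_iff ev ev_injective).1 (by simpa using congrFun hc ⟨n, hn⟩)
  · exact Polynomial.coeff_eq_zero_of_natDegree_lt (hp.trans_le hn)

open Polynomial (X) in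
noncomputable def quartic : (MvPolynomial (Fin 2) ℂ)[X] :=
  X ^ 4 - Polynomial.C (MvPolynomial.X 0 * MvPolynomial.X 1) * X ^ 3
    + Polynomial.C (MvPolynomial.X 0 ^ 2 + MvPolynomial.X 1 ^ 2 - 2) * X ^ 2
    - Polynomial.C (MvPolynomial.X 0 * MvPolynomial.X 1) * X + 1

theorem quartic_monic : quartic.Monic := by unfold quartic; monicity!

theorem quartic_natDegree : quartic.natDegree = 4 := by unfold quartic; compute_degree!

theorem quartic_coeff_zero : quartic.coeff 0 = 1 := by simp [quartic]

theorem toLaurent_quartic : toLaurent quartic = T 2 * R₁ := by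
  have h : s₃ * s₃inv = 1 := by rw [s₃, s₃inv, ← T_add]; simp
  have h₂ : (T 2 : S) = s₃ ^ 2 := by rw [s₃, T_pow]; norm_num
  simp only [quartic, R₁, map_add, map_sub, map_mul, map_pow, map_one, map_ofNat,
    Polynomial.toLaurent_X, Polynomial.toLaurent_C, h₂]
  rw [show (C (MvPolynomial.X 0) : S) = s₁ from rfl,
    show (C (MvPolynomial.X 1) : S) = s₂ from rfl, show (T 1 : S) = s₃ from rfl]
  linear_combination (-(2 * s₃ ^ 2 + s₃ * s₃inv + 1 - s₁ * s₂ * s₃)) * h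

theorem ker_ψ : RingHom.ker ψ = Ideal.span {R₁} := by
  have hR₁ : Ideal.span {R₁} ≤ RingHom.ker ψ := (Ideal.span_singleton_le_iff_mem _).2 ψ_R₁
  refine le_antisymm (fun f hf ↦ ?_) hR₁
  obtain ⟨p, hp, hfp⟩ := exists_sub_toLaurent_mem_span_toLaurent quartic_monic
    (by intro h; simpa [h] using quartic_natDegree) (by simp [quartic_coeff_zero]) f
  rw [toLaurent_quartic, Ideal.span_singleton_mul_left_unit (isUnit_T 2)] at hfp
  have hψp : ψ (toLaurent p) = 0 := by
    have := hR₁ hfp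
    rwa [RingHom.mem_ker, map_sub, RingHom.mem_ker.1 hf, zero_sub, neg_eq_zero] at this
  rwa [eq_zero_of_ψ_toLaurent_eq_zero (quartic_natDegree ▸ hp) hψp, map_zero, sub_zero] at hfp

theorem adjoin_s_eq_top : Algebra.adjoin ℂ {s₁, s₂, s₃, s₃inv} = ⊤ := by
  convert adjoin_image_C_union_T_eq_top (MvPolynomial.adjoin_range_X (R := ℂ) (σ := Fin 2)) using 2
  ext f
  simp only [s₁, s₂, s₃, s₃inv, Set.mem_insert_iff, Set.mem_singleton_iff, Set.union_insert,
    Set.union_singleton, Set.mem_image, Set.mem_range, eq_comm, Fin.exists_fin_two,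
    exists_eq_or_imp, existsAndEq, true_and]
  tauto

/-- The map `s₁ ↦ x₁+x₁⁻¹, s₂ ↦ x₂+x₂⁻¹, s₃ ↦ x₁x₂` induces a well-defined injective
`ℂ`-algebra homomorphism `ℂ[s₁,s₂,s₃,s₃⁻¹]/(R₁) → ℂ[x₁,x₁⁻¹,x₂,x₂⁻¹]` whose image is
the subring `ℂ[x₁+x₁⁻¹, x₂+x₂⁻¹, x₁x₂, x₁⁻¹x₂⁻¹]`. -/
theorem stmt_13 :
    ∃ φ : (S ⧸ Ideal.span {R₁}) →ₐ[ℂ] Tgt,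
      φ (mk s₁) = x₁ + x₁inv ∧
      φ (mk s₂) = x₂ + x₂inv ∧
      φ (mk s₃) = x₁ * x₂ ∧
      φ (mk s₃inv) = x₁inv * x₂inv ∧
      Function.Injective φ ∧
      φ.range = Algebra.adjoin ℂ {x₁ + x₁inv, x₂ + x₂inv, x₁ * x₂, x₁inv * x₂inv} := by
  have hR₁ : ∀ f ∈ Ideal.span {R₁}, ψ f = 0 := fun f hf ↦ ker_ψ.ge hf
  let φ := Ideal.Quotient.liftₐ _ ψ hR₁
  have hφ : φ.comp mk = ψ := Ideal.Quotient.liftₐ_comp _ ψ hR₁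
  have hφ_mk (f : S) : φ (mk f) = ψ f := AlgHom.congr_fun hφ f
  have hrange : φ.range = ψ.range := by
    rw [← hφ, AlgHom.range_comp, (AlgHom.range_eq_top mk).2 (Ideal.Quotient.mkₐ_surjective ℂ _),
      Algebra.map_top]
  refine ⟨φ, by rw [hφ_mk, ψ_s₁], by rw [hφ_mk, ψ_s₂], by rw [hφ_mk, ψ_s₃],
    by rw [hφ_mk, ψ_s₃inv], RingHom.lift_injective_of_ker_le_ideal _ hR₁ ker_ψ.le, ?_⟩
  rw [hrange, ← Algebra.map_top, ← adjoin_s_eq_top, AlgHom.map_adjoin]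
  simp only [Set.image_insert_eq, Set.image_singleton, ψ_s₁, ψ_s₂, ψ_s₃, ψ_s₃inv]

end Stmt13
end
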